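/- arXiv:1607.06138 — 2 statements merged into one kernel-verified Lean document; each statement's English description precedes it below -/
import Mathlib

section
/- Let T = {0,1} and L contain H^p_t with f violating H^p_t at cell (i,j) (so f(i,j) = f(i-1,j) = f(i-2,j) = t, using p ≥ 2), and suppose setting f(i,j) = 1-t would violate some vertical condition V^q_{1-t} at (i,j); then f(i,j-1) = f(i,j-2) = 1-t. Moreover: (a) if f(i-1,j-1) = t, then changing f(i-1,j) to 1-t creates no violation of any condition in L at any cell (i',j') with i'+j' ≤ i+j other than possibly removing the one at (i,j); (b) if f(i-1,j-1) = 1-t, then setting f(i,j) = 1-t and f(i,j-1) = t creates no violation at (i-1,j) or (i,j-1). -/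
/-!
A violation at `(i, j)` only reads the cells `(i - s, j)` and `(i, j - s)`, so changing one cell
affects only the violations at the cells after it in its row or column; and since all exponents
are positive, a cell that differs from both `(i - 1, j)` and `(i, j - 1)` carries no violation.
Every claim is a bookkeeping of these two facts around the window `f (i - 2) j = f (i - 1) j =
f i j = t` given by the horizontal violation.
-/

def vioH (f : ℕ → ℕ → Fin 2) (p : ℕ) (t : Fin 2) (i j : ℕ) : Prop :=
  p ≤ i ∧ ∀ s ≤ p, f (i - s) j = t

def vioV (f : ℕ → ℕ → Fin 2) (q : ℕ) (t : Fin 2) (i j : ℕ) : Prop :=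
  q ≤ j ∧ ∀ s ≤ q, f i (j - s) = t

/-- `f` violates some condition of `L = {H^{p(t)}_t, V^{q(t)}_t}` at `(i,j)`. -/
def vioAny (p q : Fin 2 → ℕ) (f : ℕ → ℕ → Fin 2) (i j : ℕ) : Prop :=
  ∃ t : Fin 2, vioH f (p t) t i j ∨ vioV f (q t) t i j

/-- The tiling obtained from `f` by putting the value `v` at cell `(a,b)`. -/
def upd (f : ℕ → ℕ → Fin 2) (a b : ℕ) (v : Fin 2) : ℕ → ℕ → Fin 2 :=
  fun i j => if i = a ∧ j = b then v else f i j

lemma Fin.two_one_sub_ne_self : ∀ u : Fin 2, 1 - u ≠ u := by decide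

section Tiling

variable {f : ℕ → ℕ → Fin 2} {a b i j : ℕ} {v : Fin 2}

@[simp] lemma upd_self : upd f a b v a b = v := if_pos ⟨rfl, rfl⟩

lemma upd_apply_of_ne (h : ¬(i = a ∧ j = b)) : upd f a b v i j = f i j := if_neg h

lemma vioH_upd_iff {p : ℕ} {t : Fin 2} (h : ¬(b = j ∧ a ≤ i)) :
    vioH (upd f a b v) p t i j ↔ vioH f p t i j :=
  and_congr_right fun _ => forall₂_congr fun s _ => by rw [upd_apply_of_ne (by omega)]

lemma vioV_upd_iff {q : ℕ} {t : Fin 2} (h : ¬(a = i ∧ b ≤ j)) :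
    vioV (upd f a b v) q t i j ↔ vioV f q t i j :=
  and_congr_right fun _ => forall₂_congr fun s _ => by rw [upd_apply_of_ne (by omega)]

variable {p q : Fin 2 → ℕ}

lemma vioAny_upd_iff (hH : ¬(b = j ∧ a ≤ i)) (hV : ¬(a = i ∧ b ≤ j)) :
    vioAny p q (upd f a b v) i j ↔ vioAny p q f i j := by
  simp only [vioAny, vioH_upd_iff hH, vioV_upd_iff hV]

lemma not_vioAny_of_ne (hp : ∀ t, 1 ≤ p t) (hq : ∀ t, 1 ≤ q t)
    (hH : f (i - 1) j ≠ f i j) (hV : f i (j - 1) ≠ f i j) : ¬vioAny p q f i j := by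
  rintro ⟨t, ⟨-, h⟩ | ⟨-, h⟩⟩
  · exact hH ((h 1 (hp t)).trans (by simpa using (h 0 (Nat.zero_le _)).symm))
  · exact hV ((h 1 (hq t)).trans (by simpa using (h 0 (Nat.zero_le _)).symm))

/-- Flipping a cell away from the value above it cannot create a horizontal violation there, so
a new violation is vertical and the two cells to its left carry the new value. -/
lemma left_eq_one_sub_of_vioAny_upd {t : Fin 2} (hp : ∀ u, 1 ≤ p u) (hq : ∀ u, 2 ≤ q u)
    (hi : 1 ≤ i) (hup : f (i - 1) j = t) (h : vioAny p q (upd f i j (1 - t)) i j) :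
    2 ≤ j ∧ f i (j - 1) = 1 - t ∧ f i (j - 2) = 1 - t := by
  obtain ⟨u, ⟨-, hH⟩ | ⟨hqj, hV⟩⟩ := h
  · have h0 : 1 - t = u := by simpa using hH 0 (Nat.zero_le _)
    have h1 : t = u := by
      simpa [upd_apply_of_ne (show ¬(i - 1 = i ∧ j = j) by omega), hup] using hH 1 (hp u)
    exact absurd (h0.trans h1.symm) (Fin.two_one_sub_ne_self t)
  · have h0 : 1 - t = u := by simpa using hV 0 (Nat.zero_le _)
    subst h0
    have hj : 2 ≤ j := (hq _).trans hqj
    refine ⟨hj, ?_, ?_⟩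
    · simpa [upd_apply_of_ne (show ¬(i = i ∧ j - 1 = j) by omega)]
        using hV 1 ((hq _).trans' one_le_two)
    · simpa [upd_apply_of_ne (show ¬(i = i ∧ j - 2 = j) by omega)] using hV 2 (hq _)

/-- Among the cells `(i', j')` with `i' + j' ≤ i + j`, only `(i - 1, j)`, `(i, j)` and
`(i - 1, j + 1)` read the flipped cell, and at each of them it disagrees with a cell of the
window. -/
lemma vioAny_of_vioAny_upd_pred (hp : ∀ u, 1 ≤ p u) (hq : ∀ u, 2 ≤ q u) {t : Fin 2}
    (hi : 2 ≤ i) (hj : 1 ≤ j) (hcur : f i j = t) (hup : f (i - 2) j = t)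
    (hdiag : f (i - 1) (j - 1) = t) (hleft : f i (j - 1) = 1 - t) {i' j' : ℕ}
    (hsum : i' + j' ≤ i + j) (h : vioAny p q (upd f (i - 1) j (1 - t)) i' j') :
    vioAny p q f i' j' ∧ (i', j') ≠ (i, j) := by
  set g := upd f (i - 1) j (1 - t)
  have hq1 : ∀ u, 1 ≤ q u := fun u => (hq u).trans' one_le_two
  have hne := Fin.two_one_sub_ne_self t
  have g_flip : g (i - 1) j = 1 - t := upd_self
  have g_up : g (i - 2) j = t := (upd_apply_of_ne (by omega)).trans hup
  have g_diag : g (i - 1) (j - 1) = t := (upd_apply_of_ne (by omega)).trans hdiag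
  have g_cur : g i j = t := (upd_apply_of_ne (by omega)).trans hcur
  have g_left : g i (j - 1) = 1 - t := (upd_apply_of_ne (by omega)).trans hleft
  have no_vio_flip : ¬vioAny p q g (i - 1) j :=
    not_vioAny_of_ne hp hq1 (by rw [g_flip, show i - 1 - 1 = i - 2 by omega, g_up]; exact hne.symm)
      (by rw [g_flip, g_diag]; exact hne.symm)
  have no_vio_cur : ¬vioAny p q g i j :=
    not_vioAny_of_ne hp hq1 (by rw [g_flip, g_cur]; exact hne) (by rw [g_left, g_cur]; exact hne)
  have vio_f : vioAny p q f i' j' := by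
    obtain ⟨u, hH | hV⟩ := h
    · by_cases hcol : j = j' ∧ i - 1 ≤ i'
      · obtain ⟨rfl, hle⟩ := hcol
        obtain rfl | rfl : i' = i - 1 ∨ i' = i := by omega
        exacts [(no_vio_flip ⟨u, .inl hH⟩).elim, (no_vio_cur ⟨u, .inl hH⟩).elim]
      · exact ⟨u, .inl ((vioH_upd_iff hcol).mp hH)⟩
    · by_cases hrow : i - 1 = i' ∧ j ≤ j'
      · obtain ⟨rfl, hle⟩ := hrow
        obtain rfl | rfl : j' = j ∨ j' = j + 1 := by omega
        · exact (no_vio_flip ⟨u, .inr hV⟩).elim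
        · have h1 := hV.2 1 ((hq u).trans' one_le_two)
          have h2 := hV.2 2 (hq u)
          rw [Nat.add_sub_cancel, g_flip] at h1
          rw [show j + 1 - 2 = j - 1 by omega, g_diag] at h2
          exact (hne (h1.trans h2.symm)).elim
      · exact ⟨u, .inr ((vioV_upd_iff hrow).mp hV)⟩
  refine ⟨vio_f, fun hij => ?_⟩
  obtain ⟨rfl, rfl⟩ := Prod.mk.inj hij
  exact no_vio_cur h

lemma not_vioAny_upd_upd_left (hp : ∀ u, 1 ≤ p u) (hq : ∀ u, 1 ≤ q u) {t : Fin 2}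
    (hi : 1 ≤ i) (hj : 2 ≤ j) (hdiag : f (i - 1) (j - 1) = 1 - t) (hleft : f i (j - 2) = 1 - t) :
    ¬vioAny p q (upd (upd f i j (1 - t)) i (j - 1) t) i (j - 1) := by
  have hne := Fin.two_one_sub_ne_self t
  apply not_vioAny_of_ne hp hq
  · rw [upd_self, upd_apply_of_ne (by omega), upd_apply_of_ne (by omega), hdiag]
    exact hne
  · rw [upd_self, upd_apply_of_ne (by omega), upd_apply_of_ne (by omega),
      show j - 1 - 1 = j - 2 by omega, hleft]
    exact hne

end Tiling

theorem stmt5_general (m n : ℕ) (p q : Fin 2 → ℕ)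
    (hp : ∀ t, 2 ≤ p t) (hq : ∀ t, 2 ≤ q t)
    (f : ℕ → ℕ → Fin 2) (t : Fin 2) (i j : ℕ)
    (hvio : vioH f (p t) t i j)
    (hflip : vioAny p q (upd f i j (1 - t)) i j) :
    (f i (j-1) = 1 - t ∧ f i (j-2) = 1 - t) ∧
    (f (i-1) (j-1) = t →
      ∀ i' j', i' < m → j' < n → i' + j' ≤ i + j →
        vioAny p q (upd f (i-1) j (1 - t)) i' j' →
          vioAny p q f i' j' ∧ (i', j') ≠ (i, j)) ∧
    (f (i-1) (j-1) = 1 - t →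
      (vioAny p q (upd (upd f i j (1 - t)) i (j-1) t) (i-1) j →
        vioAny p q f (i-1) j) ∧
      ¬ vioAny p q (upd (upd f i j (1 - t)) i (j-1) t) i (j-1)) := by
  obtain ⟨hpi, hcol⟩ := hvio
  have hp1 : ∀ u, 1 ≤ p u := fun u => (hp u).trans' one_le_two
  have hq1 : ∀ u, 1 ≤ q u := fun u => (hq u).trans' one_le_two
  have hi : 2 ≤ i := (hp t).trans hpi
  have hcur : f i j = t := by simpa using hcol 0 (Nat.zero_le _)
  obtain ⟨hj, hleft, hleft2⟩ :=
    left_eq_one_sub_of_vioAny_upd hp1 hq (by omega) (hcol 1 (hp1 t)) hflip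
  refine ⟨⟨hleft, hleft2⟩, fun hdiag i' j' _ _ hsum =>
      vioAny_of_vioAny_upd_pred hp1 hq hi (by omega) hcur (hcol 2 (hp t)) hdiag hleft hsum,
    fun hdiag => ⟨?_, not_vioAny_upd_upd_left hp1 hq1 (by omega) hj hdiag hleft2⟩⟩
  rw [vioAny_upd_iff (by omega) (by omega), vioAny_upd_iff (by omega) (by omega)]
  exact id

/-- Correctness of the local surgery step (II). -/
theorem stmt5 (m n : ℕ) (p q : Fin 2 → ℕ)
    (hp : ∀ t, 2 ≤ p t) (hq : ∀ t, 2 ≤ q t)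
    (f : ℕ → ℕ → Fin 2) (t : Fin 2) (i j : ℕ) (him : i < m) (hjn : j < n)
    (hvio : vioH f (p t) t i j)
    (hflip : vioAny p q (upd f i j (1 - t)) i j) :
    (f i (j-1) = 1 - t ∧ f i (j-2) = 1 - t) ∧
    (f (i-1) (j-1) = t →
      ∀ i' j', i' < m → j' < n → i' + j' ≤ i + j →
        vioAny p q (upd f (i-1) j (1 - t)) i' j' →
          vioAny p q f i' j' ∧ (i', j') ≠ (i, j)) ∧
    (f (i-1) (j-1) = 1 - t →
      (vioAny p q (upd (upd f i j (1 - t)) i (j-1) t) (i-1) j →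
        vioAny p q f (i-1) j) ∧
      ¬ vioAny p q (upd (upd f i j (1 - t)) i (j-1) t) i (j-1)) :=
  stmt5_general m n p q hp hq f t i j hvio hflip
end

section
/- Let T = {0,1} and L a set of conditions with all exponents p(t), q(t) ≥ 2. Suppose f violates some condition of L at cell (i,j), and (i,j) has minimal weight i+j among all violating cells. Then there is a modification of f changing only values at cells (i,j), (i-1,j), (i,j-1) such that the new tiling has no violation at any cell of weight < i+j, and either the minimal weight of violating cells strictly increases or the number of violating cells of weight i+j strictly decreases. -/
/-!
A violation at a cell only reads the cells to its left and below it, so changing `f i j` alone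
affects no other cell of weight at most `i + j`; if some value at `(i, j)` creates no violation
there, that change suffices. Otherwise each value `u` completes a horizontal or a vertical run
of `u`'s ending at `(i, j)`, and since runs have length at least `2`, the two values `t ≠ t'`
complete runs in different directions: `f (i-1) j = f (i-2) j = t` and
`f i (j-1) = f i (j-2) = t'`. If `f (i-1) (j-1) ≠ t'` we put `t` at `(i, j)` and `t'` at
`(i-1, j)`; otherwise, symmetrically, `t'` at `(i, j)` and `t` at `(i, j-1)`. The neighbours of
the changed cells break every run through them, so `(i, j)` stops violating and no new
violation of weight at most `i + j` appears.
-/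

open Function

def setCell (f : ℕ → ℕ → Fin 2) (c d : ℕ) (u : Fin 2) : ℕ → ℕ → Fin 2 :=
  fun a b => if a = c ∧ b = d then u else f a b

section setCell

variable {f : ℕ → ℕ → Fin 2} {a b c d : ℕ} {u : Fin 2}

@[simp]
lemma setCell_same : setCell f c d u c d = u := if_pos ⟨rfl, rfl⟩

lemma setCell_of_ne (h : a ≠ c ∨ b ≠ d) : setCell f c d u a b = f a b :=
  if_neg (by omega)

lemma swap_setCell : swap (setCell f c d u) = setCell (swap f) d c u := by
  ext a b
  simp only [swap, setCell, and_comm]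

end setCell

section violations

variable {p q : Fin 2 → ℕ} {f : ℕ → ℕ → Fin 2} {a b c d s k : ℕ} {t u : Fin 2}

lemma vioH.apply_eq (h : vioH f k t a b) (hs : s ≤ k) (hc : a - s = c) : f c b = t :=
  hc ▸ h.2 s hs

lemma vioV.apply_eq (h : vioV f k t a b) (hs : s ≤ k) (hd : b - s = d) : f a d = t :=
  hd ▸ h.2 s hs

lemma vioAny_swap : vioAny q p (swap f) b a ↔ vioAny p q f a b :=
  exists_congr fun _ => or_comm

lemma vioH_setCell_iff (h : b = d → a < c) :
    vioH (setCell f c d u) k t a b ↔ vioH f k t a b :=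
  and_congr_right fun _ => forall₂_congr fun s _ => by rw [setCell_of_ne (by omega)]

lemma vioV_setCell_iff (h : a = c → b < d) :
    vioV (setCell f c d u) k t a b ↔ vioV f k t a b :=
  and_congr_right fun _ => forall₂_congr fun s _ => by rw [setCell_of_ne (by omega)]

/-- A change at `(c, d)` is invisible to every cell whose left and lower arms miss `(c, d)`. -/
lemma vioAny_setCell_iff (hH : b = d → a < c) (hV : a = c → b < d) :
    vioAny p q (setCell f c d u) a b ↔ vioAny p q f a b :=
  exists_congr fun _ => or_congr (vioH_setCell_iff hH) (vioV_setCell_iff hV)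

lemma not_vioAny_of_ne_of_ne (hp : ∀ t, 2 ≤ p t) (hq : ∀ t, 2 ≤ q t)
    (hleft : f (a - 1) b ≠ f a b) (hbelow : f a (b - 1) ≠ f a b) : ¬ vioAny p q f a b := by
  rintro ⟨t, h | h⟩
  · exact hleft ((h.apply_eq (by have := hp t; omega) rfl).trans
      (h.apply_eq (Nat.zero_le _) (Nat.sub_zero a)).symm)
  · exact hbelow ((h.apply_eq (by have := hq t; omega) rfl).trans
      (h.apply_eq (Nat.zero_le _) (Nat.sub_zero b)).symm)

lemma vioAny_setCell_self (hp : ∀ t, 2 ≤ p t) (hq : ∀ t, 2 ≤ q t)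
    (h : vioAny p q (setCell f a b u) a b) :
    (2 ≤ a ∧ f (a - 1) b = u ∧ f (a - 2) b = u) ∨
      (2 ≤ b ∧ f a (b - 1) = u ∧ f a (b - 2) = u) := by
  obtain ⟨t, h | h⟩ := h
  · have ht : u = t := by simpa using h.apply_eq (Nat.zero_le _) (Nat.sub_zero a)
    have hpt := hp t
    have ha : 2 ≤ a := hpt.trans h.1
    subst ht
    exact Or.inl ⟨ha, (setCell_of_ne (by omega)).symm.trans (h.apply_eq (by omega) rfl),
      (setCell_of_ne (by omega)).symm.trans (h.apply_eq hpt rfl)⟩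
  · have ht : u = t := by simpa using h.apply_eq (Nat.zero_le _) (Nat.sub_zero b)
    have hqt := hq t
    have hb : 2 ≤ b := hqt.trans h.1
    subst ht
    exact Or.inr ⟨hb, (setCell_of_ne (by omega)).symm.trans (h.apply_eq (by omega) rfl),
      (setCell_of_ne (by omega)).symm.trans (h.apply_eq hqt rfl)⟩

end violations

def vioCells (m n : ℕ) (p q : Fin 2 → ℕ) (f : ℕ → ℕ → Fin 2) (w : ℕ) : Set (ℕ × ℕ) :=
  {c | c.1 < m ∧ c.2 < n ∧ c.1 + c.2 = w ∧ vioAny p q f c.1 c.2}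

structure IsRepair (m n : ℕ) (p q : Fin 2 → ℕ) (f g : ℕ → ℕ → Fin 2) (i j : ℕ) : Prop where
  eq_of_ne : ∀ a b, (a, b) ≠ (i, j) → (a, b) ≠ (i - 1, j) → (a, b) ≠ (i, j - 1) → g a b = f a b
  not_vioAny_of_lt : ∀ a b, a < m → b < n → a + b < i + j → ¬ vioAny p q g a b
  not_vioAny_self : ¬ vioAny p q g i j
  vioAny_of_eq : ∀ a b, a < m → b < n → a + b = i + j → vioAny p q g a b → vioAny p q f a b

namespace IsRepair

variable {m n i j : ℕ} {p q : Fin 2 → ℕ} {f g : ℕ → ℕ → Fin 2}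

lemma of_swap (h : IsRepair n m q p (swap f) (swap g) j i) : IsRepair m n p q f g i j where
  eq_of_ne a b h₁ h₂ h₃ := h.eq_of_ne b a (fun e => h₁ (congrArg Prod.swap e))
    (fun e => h₃ (congrArg Prod.swap e)) (fun e => h₂ (congrArg Prod.swap e))
  not_vioAny_of_lt a b ha hb hab := by
    rw [← vioAny_swap]
    exact h.not_vioAny_of_lt b a hb ha (by omega)
  not_vioAny_self := by
    rw [← vioAny_swap]
    exact h.not_vioAny_self
  vioAny_of_eq a b ha hb hab hg := by
    rw [← vioAny_swap] at hg ⊢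
    exact h.vioAny_of_eq b a hb ha (by omega) hg

lemma ncard_vioCells_lt (h : IsRepair m n p q f g i j) (him : i < m) (hjn : j < n)
    (hvio : vioAny p q f i j) :
    (vioCells m n p q g (i + j)).ncard < (vioCells m n p q f (i + j)).ncard := by
  have hsub : vioCells m n p q g (i + j) ⊆ vioCells m n p q f (i + j) :=
    fun c ⟨ha, hb, hab, hc⟩ => ⟨ha, hb, hab, h.vioAny_of_eq _ _ ha hb hab hc⟩
  refine Set.ncard_lt_ncard ((Set.ssubset_iff_of_subset hsub).2 ?_) ?_
  · exact ⟨(i, j), ⟨him, hjn, rfl, hvio⟩, fun hg => h.not_vioAny_self hg.2.2.2⟩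
  · exact ((Set.finite_Iio m).prod (Set.finite_Iio n)).subset fun c hc => ⟨hc.1, hc.2.1⟩

end IsRepair

section repair

variable {m n i j : ℕ} {p q : Fin 2 → ℕ} {f : ℕ → ℕ → Fin 2} {t t' u : Fin 2}

lemma isRepair_setCell
    (hmin : ∀ a b, a < m → b < n → a + b < i + j → ¬ vioAny p q f a b)
    (hu : ¬ vioAny p q (setCell f i j u) i j) : IsRepair m n p q f (setCell f i j u) i j where
  eq_of_ne a b h _ _ := setCell_of_ne (by simpa [Prod.ext_iff, ← not_and_or] using h)
  not_vioAny_of_lt a b ha hb hab := by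
    rw [vioAny_setCell_iff (by omega) (by omega)]
    exact hmin a b ha hb hab
  not_vioAny_self := hu
  vioAny_of_eq a b _ _ hab hg := by
    by_cases hc : a = i ∧ b = j
    · obtain ⟨rfl, rfl⟩ := hc
      exact absurd hg hu
    · rwa [vioAny_setCell_iff (by omega) (by omega)] at hg

lemma isRepair_setCell_left (hp : ∀ t, 2 ≤ p t) (hq : ∀ t, 2 ≤ q t)
    (hmin : ∀ a b, a < m → b < n → a + b < i + j → ¬ vioAny p q f a b)
    (hi : 2 ≤ i) (hj : 1 ≤ j) (htt' : t ≠ t')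
    (hleft : f (i - 2) j = t) (hbelow : f i (j - 1) = t') (hdiag : f (i - 1) (j - 1) ≠ t') :
    IsRepair m n p q f (setCell (setCell f i j t) (i - 1) j t') i j := by
  set g := setCell (setCell f i j t) (i - 1) j t' with hg_def
  have hg : ∀ a b, a ≠ i - 1 ∨ b ≠ j → a ≠ i ∨ b ≠ j → g a b = f a b := fun a b h₁ h₂ => by
    rw [hg_def, setCell_of_ne h₁, setCell_of_ne h₂]
  have hg_self : g i j = t := by rw [hg_def, setCell_of_ne (by omega), setCell_same]
  have hg_left : g (i - 1) j = t' := setCell_same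
  have hg_iff : ∀ a b, (b = j → a < i - 1) → (a = i - 1 → b < j) → (b = j → a < i) →
      (a = i → b < j) → (vioAny p q g a b ↔ vioAny p q f a b) := fun a b h₁ h₂ h₃ h₄ => by
    rw [hg_def, vioAny_setCell_iff h₁ h₂, vioAny_setCell_iff h₃ h₄]
  have hself : ¬ vioAny p q g i j := not_vioAny_of_ne_of_ne hp hq
    (by rw [hg_left, hg_self]; exact htt'.symm)
    (by rw [hg _ _ (by omega) (by omega), hbelow, hg_self]; exact htt'.symm)
  refine ⟨fun a b h₁ h₂ _ => hg a b ?_ ?_, fun a b ha hb hab => ?_, hself,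
    fun a b _ _ hab hv => ?_⟩
  · simpa [Prod.ext_iff, ← not_and_or] using h₂
  · simpa [Prod.ext_iff, ← not_and_or] using h₁
  · by_cases hc : a = i - 1 ∧ b = j
    · obtain ⟨rfl, rfl⟩ := hc
      refine not_vioAny_of_ne_of_ne hp hq ?_ ?_ <;> rw [hg_left, hg _ _ (by omega) (by omega)]
      · rw [show i - 1 - 1 = i - 2 by omega, hleft]
        exact htt'
      · exact hdiag
    · rw [hg_iff a b (by omega) (by omega) (by omega) (by omega)]
      exact hmin a b ha hb hab
  · by_cases hc : a = i ∨ a = i - 1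
    · obtain rfl | rfl := hc
      · obtain rfl : b = j := by omega
        exact absurd hv hself
      obtain ⟨v, hH | hV⟩ := hv
      · exact ⟨v, Or.inl ((vioH_setCell_iff (by omega)).1 ((vioH_setCell_iff (by omega)).1 hH))⟩
      · -- the vertical run through `(i-1, j)` would continue to `(i-1, j-1)`
        have hqv := hq v
        have h₁ : g (i - 1) j = v := hV.apply_eq (s := 1) (by omega) (by omega)
        have h₂ : g (i - 1) (j - 1) = v := hV.apply_eq (s := 2) hqv (by omega)
        rw [hg_left] at h₁
        rw [hg _ _ (by omega) (by omega)] at h₂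
        exact absurd (h₂.trans h₁.symm) hdiag
    · rwa [hg_iff a b (by omega) (by omega) (by omega) (by omega)] at hv

lemma isRepair_setCell_below (hp : ∀ t, 2 ≤ p t) (hq : ∀ t, 2 ≤ q t)
    (hmin : ∀ a b, a < m → b < n → a + b < i + j → ¬ vioAny p q f a b)
    (hj : 2 ≤ j) (hi : 1 ≤ i) (htt' : t ≠ t')
    (hbelow : f i (j - 2) = t) (hleft : f (i - 1) j = t') (hdiag : f (i - 1) (j - 1) ≠ t') :
    IsRepair m n p q f (setCell (setCell f i j t) i (j - 1) t') i j := by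
  have hmin' : ∀ a b, a < n → b < m → a + b < j + i → ¬ vioAny q p (swap f) a b :=
    fun a b ha hb hab => by
      rw [vioAny_swap]
      exact hmin b a hb ha (by omega)
  refine IsRepair.of_swap ?_
  rw [swap_setCell, swap_setCell]
  exact isRepair_setCell_left hq hp hmin' hj hi htt' hbelow hleft hdiag

lemma exists_runs_of_forall_vioAny_setCell (hp : ∀ t, 2 ≤ p t) (hq : ∀ t, 2 ≤ q t)
    (h : ∀ u, vioAny p q (setCell f i j u) i j) :
    ∃ t t', t ≠ t' ∧ 2 ≤ i ∧ 2 ≤ j ∧ f (i - 1) j = t ∧ f (i - 2) j = t ∧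
      f i (j - 1) = t' ∧ f i (j - 2) = t' := by
  rcases vioAny_setCell_self hp hq (h 0) with ⟨hi, h₀, h₀'⟩ | ⟨hj, h₀, h₀'⟩ <;>
    rcases vioAny_setCell_self hp hq (h 1) with ⟨hi', h₁, h₁'⟩ | ⟨hj', h₁, h₁'⟩
  · exact absurd (h₀.symm.trans h₁) (by decide)
  · exact ⟨0, 1, by decide, hi, hj', h₀, h₀', h₁, h₁'⟩
  · exact ⟨1, 0, by decide, hi', hj, h₁, h₁', h₀, h₀'⟩
  · exact absurd (h₀.symm.trans h₁) (by decide)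

lemma exists_isRepair (hp : ∀ t, 2 ≤ p t) (hq : ∀ t, 2 ≤ q t)
    (hmin : ∀ a b, a < m → b < n → a + b < i + j → ¬ vioAny p q f a b) :
    ∃ g, IsRepair m n p q f g i j := by
  by_cases hfix : ∃ u, ¬ vioAny p q (setCell f i j u) i j
  · obtain ⟨u, hu⟩ := hfix
    exact ⟨_, isRepair_setCell hmin hu⟩
  simp only [not_exists, not_not] at hfix
  obtain ⟨t, t', htt', hi, hj, hl₁, hl₂, hb₁, hb₂⟩ :=
    exists_runs_of_forall_vioAny_setCell hp hq hfix
  by_cases hdiag : f (i - 1) (j - 1) = t'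
  · exact ⟨_, isRepair_setCell_below hp hq hmin hj (by omega) htt'.symm hb₂ hl₁
      (hdiag ▸ htt'.symm)⟩
  · exact ⟨_, isRepair_setCell_left hp hq hmin hi (by omega) htt' hl₂ hb₁ hdiag⟩

end repair

/-- Progress lemma: a violation at a minimal-weight cell can be repaired by
changing only `(i,j)`, `(i-1,j)`, `(i,j-1)`, without creating violations at
smaller weight, so that either the minimal weight of violating cells strictly
increases or their number at weight `i+j` strictly decreases. -/
theorem stmt6 (m n : ℕ) (p q : Fin 2 → ℕ)
    (hp : ∀ t, 2 ≤ p t) (hq : ∀ t, 2 ≤ q t)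
    (f : ℕ → ℕ → Fin 2) (i j : ℕ) (him : i < m) (hjn : j < n)
    (hvio : vioAny p q f i j)
    (hmin : ∀ i' j', i' < m → j' < n → i' + j' < i + j → ¬ vioAny p q f i' j') :
    ∃ g : ℕ → ℕ → Fin 2,
      (∀ i' j', (i', j') ≠ (i, j) → (i', j') ≠ (i-1, j) → (i', j') ≠ (i, j-1) →
        g i' j' = f i' j') ∧
      (∀ i' j', i' < m → j' < n → i' + j' < i + j → ¬ vioAny p q g i' j') ∧
      ((∀ i' j', i' < m → j' < n → i' + j' ≤ i + j → ¬ vioAny p q g i' j') ∨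
        Set.ncard {c : ℕ × ℕ | c.1 < m ∧ c.2 < n ∧ c.1 + c.2 = i + j ∧
            vioAny p q g c.1 c.2} <
          Set.ncard {c : ℕ × ℕ | c.1 < m ∧ c.2 < n ∧ c.1 + c.2 = i + j ∧
            vioAny p q f c.1 c.2}) := by
  obtain ⟨g, hg⟩ := exists_isRepair hp hq hmin
  exact ⟨g, hg.eq_of_ne, hg.not_vioAny_of_lt, Or.inr (hg.ncard_vioCells_lt him hjn hvio)⟩
end
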